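/- Let G be a finite graph with a regular rooted tree decomposition (T,bag), let q,k ∈ ℕ, let s,t ∈ V(G) and S ⊆ V(G) with |S| ≤ k, and set Ŝ = S ∪ {s,t}. Let x be a node of T such that bag(x) is (q,k)-unbreakable in G. Let Z be the set of children z of x with comp(z) ∩ Ŝ ≠ ∅, and suppose that for each z ∈ Z a semi-correct profile Π_z at z is given. Let bgraph' be the graph obtained from the induced subgraph G[bag(x)] by adding the following edges: for each z ∈ Z, an edge between the two elements of every pair in Π_z both of whose elements lie in bag(x); and for each child w of x with w ∉ Z, an edge between every pair of distinct vertices of adh(w). Then for every pair of distinct vertices a,b ∈ bag(x): (i) if a and b are connected in bgraph' − S, then a and b are connected in G − S; and (ii) if there exist sets A,B ⊆ bag(x), each of size q+1 and disjoint from S, with a ∈ A and b ∈ B, such that the induced subgraphs bgraph'[A] and bgraph'[B] are connected, then a and b are connected in G − S. -/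

import Mathlib

/-- A finite rooted tree, encoded by its parent function. -/
structure RTree (ι : Type*) where
  root : ι
  parent : ι → ι
  parent_root : parent root = root
  reaches_root : ∀ x : ι, ∃ n : ℕ, parent^[n] x = root

namespace RTree

variable {ι : Type*} (T : RTree ι)

/-- `T.Anc x y` means `x` is an ancestor of `y` (every node is its own ancestor). -/
def Anc (x y : ι) : Prop := ∃ n : ℕ, T.parent^[n] y = x

/-- `T.IsChild y x` means `y` is a child of `x`. -/
def IsChild (y x : ι) : Prop := y ≠ T.root ∧ T.parent y = x

/-- The underlying undirected graph of the rooted tree. -/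
def treeGraph : SimpleGraph ι where
  Adj x y := x ≠ y ∧ (T.IsChild x y ∨ T.IsChild y x)
  symm := ⟨fun x y h => ⟨h.1.symm, h.2.symm⟩⟩
  loopless := ⟨fun x h => h.1 rfl⟩

end RTree

/-- Two vertices are connected by a walk all of whose vertices lie in `U`. -/
def ConnIn {V : Type*} (G : SimpleGraph V) (U : Set V) (a b : V) : Prop :=
  ∃ p : G.Walk a b, ∀ w ∈ p.support, w ∈ U

theorem ConnIn.symm {V : Type*} {G : SimpleGraph V} {U : Set V} {a b : V}
    (h : ConnIn G U a b) : ConnIn G U b a := by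
  obtain ⟨p, hp⟩ := h
  refine ⟨p.reverse, fun w hw => hp w ?_⟩
  rwa [SimpleGraph.Walk.support_reverse, List.mem_reverse] at hw

/-- `X` is `(q,k)`-unbreakable in the induced subgraph `G[U]`: for every separation `(A,B)`
of `G[U]` of order at most `k`, one of the two sides contains at most `q` vertices of `X`. -/
def UnbreakableIn {V : Type*} (G : SimpleGraph V) (U X : Set V) (q k : ℕ) : Prop :=
  ∀ A B : Set V, A ⊆ U → B ⊆ U → A ∪ B = U →
    (∀ a ∈ A \ B, ∀ b ∈ B \ A, ¬ G.Adj a b) →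
    (A ∩ B).ncard ≤ k →
    (A ∩ X).ncard ≤ q ∨ (B ∩ X).ncard ≤ q

/-- A rooted tree decomposition of the graph `G`, with nodes indexed by `ι`. -/
structure TreeDecomp {V : Type*} (G : SimpleGraph V) (ι : Type*) extends RTree ι where
  bag : ι → Set V
  /-- (T1) for every vertex, the set of nodes whose bag contains it
  is a nonempty subtree of the tree. -/
  bag_subtree : ∀ u : V, ((toRTree.treeGraph).induce {x : ι | u ∈ bag x}).Connected
  /-- (T2) every edge is contained in some bag. -/
  bag_edge : ∀ u v : V, G.Adj u v → ∃ x : ι, u ∈ bag x ∧ v ∈ bag x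

namespace TreeDecomp

variable {V ι : Type*} {G : SimpleGraph V} (D : TreeDecomp G ι)

/-- The adhesion of a node: intersection of its bag with the bag of its parent
(empty at the root). -/
def adh (x : ι) : Set V :=
  {v : V | x ≠ D.root ∧ v ∈ D.bag (D.parent x) ∧ v ∈ D.bag x}

/-- The margin of a node. -/
def mrg (x : ι) : Set V := D.bag x \ D.adh x

/-- The cone at a node: union of the bags at all its descendants. -/
def cone (x : ι) : Set V := {v : V | ∃ y : ι, D.toRTree.Anc x y ∧ v ∈ D.bag y}

/-- The component at a node. -/
def comp (x : ι) : Set V := D.cone x \ D.adh x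

/-- A tree decomposition is regular if every non-root node has nonempty margin,
connected component, and every adhesion vertex has a neighbour in the component. -/
def Regular : Prop :=
  ∀ x : ι, x ≠ D.root →
    (D.mrg x).Nonempty ∧
    (G.induce (D.comp x)).Connected ∧
    ∀ u ∈ D.adh x, ∃ w ∈ D.comp x, G.Adj u w

end TreeDecomp

/-- Adjacency in the torso of `X` in the induced subgraph `G[U]`:
`a, b ∈ X` are adjacent iff `G[U]` contains an `a`–`b` path whose internal vertices
all avoid `X`. -/
def TorsoAdj {V : Type*} (G : SimpleGraph V) (U X : Set V) (a b : V) : Prop :=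
  a ≠ b ∧ a ∈ X ∧ b ∈ X ∧
    ∃ p : G.Walk a b, (∀ w ∈ p.support, w ∈ U) ∧
      (∀ w ∈ p.support, w ≠ a → w ≠ b → w ∉ X)

namespace TreeDecomp

variable {V ι : Type*} {G : SimpleGraph V} (D : TreeDecomp G ι)

/-- `D(x) = adh(x) ∪ ({s,t} ∩ cone(x))`. -/
def Dset (s t : V) (x : ι) : Set V := D.adh x ∪ ({s, t} ∩ D.cone x)

end TreeDecomp

namespace TreeDecomp

variable {V ι : Type*} {G : SimpleGraph V} (D : TreeDecomp G ι)

/-- A semi-correct profile at `x` (with respect to `s`, `t` and the failed set `S`):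
a set of unordered pairs of distinct elements of `D(x)` containing every pair connected
by an `S`-avoiding path in `G[cone(x)]`, all of whose pairs are connected by an
`S`-avoiding path in `G`. -/
def SemiCorrectProfile (s t : V) (S : Set V) (x : ι) (P : Set (Sym2 V)) : Prop :=
  (∀ a b : V, s(a, b) ∈ P → a ≠ b ∧ a ∈ D.Dset s t x ∧ b ∈ D.Dset s t x) ∧
  (∀ a b : V, a ≠ b → a ∈ D.Dset s t x → b ∈ D.Dset s t x →
      ConnIn G (D.cone x \ S) a b → s(a, b) ∈ P) ∧
  (∀ a b : V, s(a, b) ∈ P → ConnIn G Sᶜ a b)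

end TreeDecomp

/-! Every edge of `bgraph'` between vertices outside `S` is realised by an `S`-avoiding path of
`G`: edges of `G` trivially, profile edges by semi-correctness, and clique edges on `adh(w)` for an
unaffected child `w` through the connected, `S`-free component `comp(w)`, which regularity attaches
to every adhesion vertex. This gives (i). For (ii), if `a` and `b` were separated in `G − S`, the
component `C` of `a` in `G − S` would yield the separation `(C ∪ S, (V \ C) ∪ S)` of order `|S| ≤ k`
with the `q + 1` vertices of `A` on one side and those of `B` on the other, contradicting
unbreakability of `bag(x)`. -/

section ConnIn

variable {V : Type*} {G H : SimpleGraph V} {U U' : Set V} {a b c : V}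

theorem ConnIn.mono (h : ConnIn G U a b) (hU : U ⊆ U') : ConnIn G U' a b := by
  obtain ⟨p, hp⟩ := h
  exact ⟨p, fun w hw => hU (hp w hw)⟩

theorem ConnIn.trans (h₁ : ConnIn G U a b) (h₂ : ConnIn G U b c) : ConnIn G U a c := by
  obtain ⟨p, hp⟩ := h₁
  obtain ⟨p', hp'⟩ := h₂
  refine ⟨p.append p', fun w hw => ?_⟩
  rw [SimpleGraph.Walk.mem_support_append_iff] at hw
  exact hw.elim (hp w) (hp' w)

theorem ConnIn.refl (ha : a ∈ U) : ConnIn G U a a :=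
  ⟨.nil, fun w hw => by rwa [List.mem_singleton.mp hw]⟩

theorem ConnIn.of_adj (h : G.Adj a b) (ha : a ∈ U) (hb : b ∈ U) : ConnIn G U a b :=
  ⟨h.toWalk, fun w hw => by
    rcases List.mem_pair.mp (by simpa using hw) with rfl | rfl
    exacts [ha, hb]⟩

theorem ConnIn.of_induce_connected (h : (G.induce U).Connected) (ha : a ∈ U) (hb : b ∈ U) :
    ConnIn G U a b := by
  obtain ⟨p⟩ := h ⟨a, ha⟩ ⟨b, hb⟩
  have hp : ∀ w ∈ (p.map (SimpleGraph.Embedding.induce U).toHom).support, w ∈ U := by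
    intro w hw
    rw [SimpleGraph.Walk.support_map] at hw
    obtain ⟨⟨y, hy⟩, -, rfl⟩ := List.mem_map.mp hw
    exact hy
  exact ⟨_, hp⟩

theorem ConnIn.of_forall_adj (hH : ∀ u v, H.Adj u v → u ∈ U → v ∈ U → ConnIn G U u v)
    (h : ConnIn H U a b) : ConnIn G U a b := by
  obtain ⟨p, hp⟩ := h
  induction p with
  | nil => exact .refl (hp _ (by simp))
  | cons hadj p ih =>
    have hp' : ∀ w ∈ p.support, w ∈ U := fun w hw => hp w (List.mem_cons_of_mem _ hw)
    exact (hH _ _ hadj (hp _ (by simp)) (hp' _ p.start_mem_support)).trans (ih hp')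

end ConnIn

theorem TreeDecomp.connIn_of_mem_adh {V ι : Type*} {G : SimpleGraph V} {D : TreeDecomp G ι}
    (hreg : D.Regular) {w : ι} (hw : w ≠ D.root) {U : Set V} (hU : D.comp w ⊆ U) {u v : V}
    (hu : u ∈ D.adh w) (hv : v ∈ D.adh w) (huU : u ∈ U) (hvU : v ∈ U) : ConnIn G U u v := by
  obtain ⟨-, hconn, hnbr⟩ := hreg w hw
  obtain ⟨u', hu', hadju⟩ := hnbr u hu
  obtain ⟨v', hv', hadjv⟩ := hnbr v hv
  exact ((ConnIn.of_adj hadju huU (hU hu')).trans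
    ((ConnIn.of_induce_connected hconn hu' hv').mono hU)).trans (.of_adj hadjv.symm (hU hv') hvU)

section Unbreakable

variable {V : Type*} {G : SimpleGraph V} {X S : Set V} {q k : ℕ}

/-- A set `C` whose edge boundary is covered by `S` gives the separation `(C ∪ S, Cᶜ ∪ S)`. -/
theorem UnbreakableIn.ncard_le_of_boundary (hunb : UnbreakableIn G Set.univ X q k)
    (hS : S.ncard ≤ k) {C : Set V} (hC : ∀ u ∈ C, ∀ v ∉ C, G.Adj u v → u ∈ S ∨ v ∈ S) :
    ((C ∪ S) ∩ X).ncard ≤ q ∨ ((Cᶜ ∪ S) ∩ X).ncard ≤ q := by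
  have hcap : (C ∪ S) ∩ (Cᶜ ∪ S) = S := by ext v; by_cases v ∈ C <;> simp [*]
  refine hunb _ _ (Set.subset_univ _) (Set.subset_univ _) (by ext; simp; tauto) ?_
    (by rwa [hcap])
  rintro u ⟨-, hu⟩ v ⟨-, hv⟩ hadj
  simp only [Set.mem_union, Set.mem_compl_iff, not_or, not_not] at hu hv
  rcases hC u hu.1 v hv.1 hadj with h | h
  exacts [hu.2 h, hv.2 h]

theorem UnbreakableIn.connIn_of_lt_ncard [Finite V] (hunb : UnbreakableIn G Set.univ X q k)
    (hS : S.ncard ≤ k) {A B : Set V} (hA : A ⊆ X) (hB : B ⊆ X) (hqA : q < A.ncard)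
    (hqB : q < B.ncard) {a b : V} (hAa : ∀ v ∈ A, ConnIn G Sᶜ a v)
    (hBb : ∀ v ∈ B, ConnIn G Sᶜ b v) : ConnIn G Sᶜ a b := by
  by_contra hab
  set C := {v | ConnIn G Sᶜ a v}
  have hC : ∀ u ∈ C, ∀ v ∉ C, G.Adj u v → u ∈ S ∨ v ∈ S := fun u hu v hv hadj => by
    by_contra! h
    exact hv (hu.trans (.of_adj hadj h.1 h.2))
  rcases hunb.ncard_le_of_boundary hS hC with h | h
  · have : A ⊆ (C ∪ S) ∩ X := fun v hv => ⟨.inl (hAa v hv), hA hv⟩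
    exact absurd (Set.ncard_le_ncard this) (by omega)
  · have : B ⊆ (Cᶜ ∪ S) ∩ X := fun v hv =>
      ⟨.inl fun hvC => hab (hvC.trans (hBb v hv).symm), hB hv⟩
    exact absurd (Set.ncard_le_ncard this) (by omega)

end Unbreakable

theorem stmt15_general {V ι : Type*} [Fintype V] {G : SimpleGraph V}
    (D : TreeDecomp G ι) (hreg : D.Regular) (q k : ℕ)
    (s t : V) (S : Set V) (hSk : S.ncard ≤ k)
    (x : ι) (hunb : UnbreakableIn G Set.univ (D.bag x) q k)
    (Z : Set ι) (hZ : Z = {z : ι | D.toRTree.IsChild z x ∧ (D.comp z ∩ (S ∪ {s, t})).Nonempty})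
    (P : ι → Set (Sym2 V)) (hP : ∀ z ∈ Z, D.SemiCorrectProfile s t S z (P z))
    (Bg : SimpleGraph V)
    (hBg : ∀ a b : V, Bg.Adj a b ↔ a ≠ b ∧ a ∈ D.bag x ∧ b ∈ D.bag x ∧
        (G.Adj a b ∨ (∃ z ∈ Z, s(a, b) ∈ P z) ∨
          (∃ w : ι, D.toRTree.IsChild w x ∧ w ∉ Z ∧ a ∈ D.adh w ∧ b ∈ D.adh w)))
    (a b : V) :
    (ConnIn Bg Sᶜ a b → ConnIn G Sᶜ a b) ∧
    ((∃ A B : Set V, A ⊆ D.bag x ∧ B ⊆ D.bag x ∧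
        A.ncard = q + 1 ∧ B.ncard = q + 1 ∧ Disjoint A S ∧ Disjoint B S ∧
        a ∈ A ∧ b ∈ B ∧ (Bg.induce A).Connected ∧ (Bg.induce B).Connected) →
      ConnIn G Sᶜ a b) := by
  have hedge : ∀ u v, Bg.Adj u v → u ∈ Sᶜ → v ∈ Sᶜ → ConnIn G Sᶜ u v := by
    intro u v huv hu hv
    obtain ⟨-, -, -, hadj | ⟨z, hz, huvz⟩ | ⟨w, hw, hwZ, huw, hvw⟩⟩ := (hBg u v).mp huv
    · exact .of_adj hadj hu hv
    · exact (hP z hz).2.2 u v huvz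
    · have hcomp : D.comp w ⊆ Sᶜ := fun y hy hyS => hwZ (hZ ▸ ⟨hw, y, hy, .inl hyS⟩)
      exact D.connIn_of_mem_adh hreg hw.1 hcomp huw hvw hu hv
  have hreach : ∀ {A : Set V} {c : V}, Disjoint A S → (Bg.induce A).Connected → c ∈ A →
      ∀ v ∈ A, ConnIn G Sᶜ c v := fun hAS hA hc v hv =>
    ((ConnIn.of_induce_connected hA hc hv).mono hAS.subset_compl_right).of_forall_adj hedge
  refine ⟨.of_forall_adj hedge, ?_⟩
  rintro ⟨A, B, hAx, hBx, hA, hB, hAS, hBS, haA, hbB, hAconn, hBconn⟩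
  exact hunb.connIn_of_lt_ncard hSk hAx hBx (by omega) (by omega)
    (hreach hAS hAconn haA) (hreach hBS hBconn hbB)

/-- Let `bag(x)` be `(q,k)`-unbreakable in `G`, let `Z` be the set of
affected children of `x` (those whose component meets `Ŝ = S ∪ {s,t}`), with a
semi-correct profile `P z` for each `z ∈ Z`, and let `bgraph'` be obtained from
`G[bag(x)]` by adding the pairs of each `P z` lying inside `bag(x)` as edges, and turning
`adh(w)` into a clique for every unaffected child `w`. Then for distinct
`a, b ∈ bag(x)`: (i) if `a` and `b` are connected in `bgraph' − S` then they are
connected in `G − S`; and (ii) if there are `(q+1)`-element sets `A ∋ a` and `B ∋ b`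
inside `bag(x)`, disjoint from `S`, with `bgraph'[A]` and `bgraph'[B]` connected, then
`a` and `b` are connected in `G − S`. -/
theorem stmt15 {V ι : Type*} [Fintype V] [Fintype ι] {G : SimpleGraph V}
    (D : TreeDecomp G ι) (hreg : D.Regular) (q k : ℕ)
    (s t : V) (S : Set V) (hSk : S.ncard ≤ k)
    (x : ι) (hunb : UnbreakableIn G Set.univ (D.bag x) q k)
    (Z : Set ι) (hZ : Z = {z : ι | D.toRTree.IsChild z x ∧ (D.comp z ∩ (S ∪ {s, t})).Nonempty})
    (P : ι → Set (Sym2 V)) (hP : ∀ z ∈ Z, D.SemiCorrectProfile s t S z (P z))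
    (Bg : SimpleGraph V)
    (hBg : ∀ a b : V, Bg.Adj a b ↔ a ≠ b ∧ a ∈ D.bag x ∧ b ∈ D.bag x ∧
        (G.Adj a b ∨ (∃ z ∈ Z, s(a, b) ∈ P z) ∨
          (∃ w : ι, D.toRTree.IsChild w x ∧ w ∉ Z ∧ a ∈ D.adh w ∧ b ∈ D.adh w)))
    (a b : V) (ha : a ∈ D.bag x) (hb : b ∈ D.bag x) (hab : a ≠ b) :
    (ConnIn Bg Sᶜ a b → ConnIn G Sᶜ a b) ∧
    ((∃ A B : Set V, A ⊆ D.bag x ∧ B ⊆ D.bag x ∧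
        A.ncard = q + 1 ∧ B.ncard = q + 1 ∧ Disjoint A S ∧ Disjoint B S ∧
        a ∈ A ∧ b ∈ B ∧ (Bg.induce A).Connected ∧ (Bg.induce B).Connected) →
      ConnIn G Sᶜ a b) :=
  stmt15_general D hreg q k s t S hSk x hunb Z hZ P hP Bg hBg a b
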